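/- arXiv:0711.1691 — 5 statements merged into one kernel-verified Lean document; each statement's English description precedes it below -/
import Mathlib

section
/- Let c ≥ 1 and c' ≥ 1 be integers, and let m = (m_1,…,m_c) and m' = (m'_1,…,m'_{c'}) be sequences of positive real numbers. Then F(m ⋆ m') ≤ F(m)·F(m'). -/
/-!
The top entry of `m ⋆ m'` is `m_c + m'_{c'}`, and below the top every entry of `m ⋆ m'` is at
most the corresponding entry of the join of `m'` with `m` shortened by one term, and likewise with
`m'` shortened. Splitting `∏ (m ⋆ m') = ∏_{r < c+c'} (m ⋆ m')_r · (m_c + m'_{c'})` into two products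
and using Pascal's rule, induction gives `∏ (m ⋆ m') ≤ C(c+c', c) · ∏ m · ∏ m'`, which is the
claim after division by `(c+c')! = C(c+c', c) · c! · c'!`.
-/

open Finset

/-- `F(m) = (∏_{i=1}^c m_i)/c!` for a sequence given by `m : ℕ → ℝ` on indices `1,…,c`. -/
noncomputable def Fval (c : ℕ) (m : ℕ → ℝ) : ℝ :=
  (∏ i ∈ Finset.Icc 1 c, m i) / (Nat.factorial c)

/-- Extend a sequence by the convention `m_0 = 0`. -/
def ext0 (m : ℕ → ℝ) : ℕ → ℝ := fun i => if i = 0 then 0 else m i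

/-- The lower join `(m ⋆ m')_r = min{m_i + m'_j : i + j = r, 0 ≤ i ≤ c, 0 ≤ j ≤ c'}`,
with the convention `m_0 = m'_0 = 0`. -/
noncomputable def lowerJoin (c c' : ℕ) (m m' : ℕ → ℝ) : ℕ → ℝ := fun r =>
  sInf {x : ℝ | ∃ i j : ℕ, i + j = r ∧ i ≤ c ∧ j ≤ c' ∧ x = ext0 m i + ext0 m' j}

@[simp]
lemma ext0_zero (m : ℕ → ℝ) : ext0 m 0 = 0 := rfl

@[simp]
lemma ext0_of_ne_zero (m : ℕ → ℝ) {i : ℕ} (hi : i ≠ 0) : ext0 m i = m i := if_neg hi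

lemma ext0_nonneg {c : ℕ} {m : ℕ → ℝ} (hm : ∀ i ∈ Icc 1 c, 0 ≤ m i) {i : ℕ} (hi : i ≤ c) :
    0 ≤ ext0 m i := by
  rcases Nat.eq_zero_or_pos i with rfl | hi0
  · exact le_rfl
  · rw [ext0_of_ne_zero m hi0.ne']
    exact hm i (mem_Icc.2 ⟨hi0, hi⟩)

def lowerJoinCandidates (c c' : ℕ) (m m' : ℕ → ℝ) (r : ℕ) : Set ℝ :=
  {x : ℝ | ∃ i j : ℕ, i + j = r ∧ i ≤ c ∧ j ≤ c' ∧ x = ext0 m i + ext0 m' j}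

section lowerJoin

variable {c c' : ℕ} {m m' : ℕ → ℝ}

lemma lowerJoinCandidates_finite (c c' : ℕ) (m m' : ℕ → ℝ) (r : ℕ) :
    (lowerJoinCandidates c c' m m' r).Finite :=
  (((Set.finite_Iic c).prod (Set.finite_Iic c')).image
      fun p : ℕ × ℕ => ext0 m p.1 + ext0 m' p.2).subset
    (by rintro _ ⟨i, j, -, hi, hj, rfl⟩; exact ⟨(i, j), ⟨hi, hj⟩, rfl⟩)

lemma lowerJoin_mem {r : ℕ} (hr : r ≤ c + c') :
    lowerJoin c c' m m' r ∈ lowerJoinCandidates c c' m m' r :=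
  Set.Nonempty.csInf_mem
    ⟨_, min r c, r - min r c, by omega, min_le_right r c, by omega, rfl⟩
    (lowerJoinCandidates_finite c c' m m' r)

lemma lowerJoin_le {i j r : ℕ} (hij : i + j = r) (hi : i ≤ c) (hj : j ≤ c') :
    lowerJoin c c' m m' r ≤ ext0 m i + ext0 m' j :=
  csInf_le (lowerJoinCandidates_finite c c' m m' r).bddBelow ⟨i, j, hij, hi, hj, rfl⟩

lemma lowerJoin_le_lowerJoin {c₁ c₁' r : ℕ} (hc : c₁ ≤ c) (hc' : c₁' ≤ c')
    (hr : r ≤ c₁ + c₁') : lowerJoin c c' m m' r ≤ lowerJoin c₁ c₁' m m' r := by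
  obtain ⟨i, j, hij, hi, hj, hx⟩ := lowerJoin_mem (m := m) (m' := m') hr
  rw [hx]
  exact lowerJoin_le hij (hi.trans hc) (hj.trans hc')

/-- Beyond `c + c'` the infimum is over the empty set, so this holds for every `r`. -/
lemma lowerJoin_nonneg (hm : ∀ i ∈ Icc 1 c, 0 ≤ m i) (hm' : ∀ j ∈ Icc 1 c', 0 ≤ m' j)
    (r : ℕ) : 0 ≤ lowerJoin c c' m m' r :=
  Real.sInf_nonneg <| by
    rintro _ ⟨i, j, -, hi, hj, rfl⟩
    exact add_nonneg (ext0_nonneg hm hi) (ext0_nonneg hm' hj)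

lemma lowerJoin_le_left {r : ℕ} (hr₀ : r ≠ 0) (hr : r ≤ c) : lowerJoin c c' m m' r ≤ m r := by
  simpa [hr₀] using lowerJoin_le (m := m) (m' := m') (add_zero r) hr (Nat.zero_le c')

lemma lowerJoin_le_right {r : ℕ} (hr₀ : r ≠ 0) (hr : r ≤ c') : lowerJoin c c' m m' r ≤ m' r := by
  simpa [hr₀] using lowerJoin_le (m := m) (m' := m') (zero_add r) (Nat.zero_le c) hr

lemma prod_lowerJoin_succ_succ_le (hm : ∀ i ∈ Icc 1 (c + 1), 0 ≤ m i)
    (hm' : ∀ j ∈ Icc 1 (c' + 1), 0 ≤ m' j) :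
    ∏ r ∈ Icc 1 (c + 1 + (c' + 1)), lowerJoin (c + 1) (c' + 1) m m' r ≤
      (∏ r ∈ Icc 1 (c + (c' + 1)), lowerJoin c (c' + 1) m m' r) * m (c + 1) +
        (∏ r ∈ Icc 1 (c + 1 + c'), lowerJoin (c + 1) c' m m' r) * m' (c' + 1) := by
  set J := lowerJoin (c + 1) (c' + 1) m m'
  have hJ : ∀ r, 0 ≤ J r := lowerJoin_nonneg hm hm'
  have hsplit : ∏ r ∈ Icc 1 (c + 1 + (c' + 1)), J r =
      (∏ r ∈ Icc 1 (c + c' + 1), J r) * J (c + c' + 1 + 1) := by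
    rw [show c + 1 + (c' + 1) = c + c' + 1 + 1 by omega, prod_Icc_succ_top (by omega)]
  have htop : J (c + c' + 1 + 1) ≤ m (c + 1) + m' (c' + 1) := by
    simpa using lowerJoin_le (m := m) (m' := m') (by omega : c + 1 + (c' + 1) = c + c' + 1 + 1)
      le_rfl le_rfl
  have hleft : ∏ r ∈ Icc 1 (c + c' + 1), J r ≤
      ∏ r ∈ Icc 1 (c + (c' + 1)), lowerJoin c (c' + 1) m m' r :=
    prod_le_prod (fun r _ => hJ r) fun r hr =>
      lowerJoin_le_lowerJoin (Nat.le_succ c) le_rfl (by simp at hr; omega)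
  have hright : ∏ r ∈ Icc 1 (c + c' + 1), J r ≤
      ∏ r ∈ Icc 1 (c + 1 + c'), lowerJoin (c + 1) c' m m' r := by
    rw [add_right_comm c]
    exact prod_le_prod (fun r _ => hJ r) fun r hr =>
      lowerJoin_le_lowerJoin le_rfl (Nat.le_succ c') (by simp at hr; omega)
  have hmc : 0 ≤ m (c + 1) := hm _ (mem_Icc.2 ⟨by omega, le_rfl⟩)
  have hmc' : 0 ≤ m' (c' + 1) := hm' _ (mem_Icc.2 ⟨by omega, le_rfl⟩)
  calc ∏ r ∈ Icc 1 (c + 1 + (c' + 1)), J r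
      ≤ (∏ r ∈ Icc 1 (c + c' + 1), J r) * (m (c + 1) + m' (c' + 1)) := by
        rw [hsplit]
        exact mul_le_mul_of_nonneg_left htop (prod_nonneg fun r _ => hJ r)
    _ ≤ _ := by
        rw [mul_add]
        exact add_le_add (mul_le_mul_of_nonneg_right hleft hmc)
          (mul_le_mul_of_nonneg_right hright hmc')

end lowerJoin

theorem prod_lowerJoin_le (c c' : ℕ) (m m' : ℕ → ℝ) (hm : ∀ i ∈ Icc 1 c, 0 ≤ m i)
    (hm' : ∀ j ∈ Icc 1 c', 0 ≤ m' j) :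
    ∏ r ∈ Icc 1 (c + c'), lowerJoin c c' m m' r ≤
      (c + c').choose c * ((∏ i ∈ Icc 1 c, m i) * ∏ j ∈ Icc 1 c', m' j) := by
  induction c generalizing c' with
  | zero =>
    simpa using prod_le_prod (fun r _ => lowerJoin_nonneg hm hm' r) fun r hr =>
      lowerJoin_le_right (m := m) (by simp at hr; omega) (mem_Icc.1 hr).2
  | succ c ihc =>
    induction c' with
    | zero =>
      simpa using prod_le_prod (fun r _ => lowerJoin_nonneg hm hm' r) fun r hr =>
        lowerJoin_le_left (m' := m') (by simp at hr; omega) (mem_Icc.1 hr).2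
    | succ c' ihc' =>
      have hm₀ : ∀ i ∈ Icc 1 c, 0 ≤ m i := fun i hi => hm i (Icc_subset_Icc_right c.le_succ hi)
      have hm'₀ : ∀ j ∈ Icc 1 c', 0 ≤ m' j :=
        fun j hj => hm' j (Icc_subset_Icc_right c'.le_succ hj)
      have hmc : 0 ≤ m (c + 1) := hm _ (mem_Icc.2 ⟨by omega, le_rfl⟩)
      have hmc' : 0 ≤ m' (c' + 1) := hm' _ (mem_Icc.2 ⟨by omega, le_rfl⟩)
      have hpascal : ((c + 1 + (c' + 1)).choose (c + 1) : ℝ) =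
          (c + (c' + 1)).choose c + (c + 1 + c').choose (c + 1) := by
        rw [show c + 1 + (c' + 1) = c + (c' + 1) + 1 by omega,
          show c + 1 + c' = c + (c' + 1) by omega, Nat.choose_succ_succ', Nat.cast_add]
      calc _ ≤ _ := prod_lowerJoin_succ_succ_le hm hm'
        _ ≤ (c + (c' + 1)).choose c * ((∏ i ∈ Icc 1 c, m i) * ∏ j ∈ Icc 1 (c' + 1), m' j) *
              m (c + 1) +
            (c + 1 + c').choose (c + 1) * ((∏ i ∈ Icc 1 (c + 1), m i) * ∏ j ∈ Icc 1 c', m' j) *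
              m' (c' + 1) :=
          add_le_add (mul_le_mul_of_nonneg_right (ihc _ hm₀ hm') hmc)
            (mul_le_mul_of_nonneg_right (ihc' hm'₀) hmc')
        _ = _ := by
          rw [hpascal, prod_Icc_succ_top (by omega : 1 ≤ c + 1),
            prod_Icc_succ_top (by omega : 1 ≤ c' + 1)]
          ring

theorem lowerJoin_Fval_le_general (c c' : ℕ) (m m' : ℕ → ℝ)
    (hm : ∀ i, 1 ≤ i → i ≤ c → 0 < m i) (hm' : ∀ j, 1 ≤ j → j ≤ c' → 0 < m' j) :
    Fval (c + c') (lowerJoin c c' m m') ≤ Fval c m * Fval c' m' := by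
  have hprod := prod_lowerJoin_le c c' m m' (fun i hi => (hm i (mem_Icc.1 hi).1 (mem_Icc.1 hi).2).le)
    (fun j hj => (hm' j (mem_Icc.1 hj).1 (mem_Icc.1 hj).2).le)
  have hfact : ((c + c').choose c * c.factorial * c'.factorial : ℝ) = (c + c').factorial := by
    exact_mod_cast Nat.choose_symm_add ▸ Nat.add_choose_mul_factorial_mul_factorial c c'
  unfold Fval
  calc (∏ r ∈ Icc 1 (c + c'), lowerJoin c c' m m' r) / (c + c').factorial
      ≤ (c + c').choose c * ((∏ i ∈ Icc 1 c, m i) * ∏ j ∈ Icc 1 c', m' j) / (c + c').factorial :=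
        div_le_div_of_nonneg_right hprod (by positivity)
    _ = _ := by
      have hchoose : (0 : ℝ) < (c + c').choose c := by exact_mod_cast Nat.choose_pos (by omega)
      rw [← hfact]
      field_simp

theorem lowerJoin_Fval_le (c c' : ℕ) (hc : 1 ≤ c) (hc' : 1 ≤ c') (m m' : ℕ → ℝ)
    (hm : ∀ i, 1 ≤ i → i ≤ c → 0 < m i) (hm' : ∀ j, 1 ≤ j → j ≤ c' → 0 < m' j) :
    Fval (c + c') (lowerJoin c c' m m') ≤ Fval c m * Fval c' m' :=
  lowerJoin_Fval_le_general c c' m m' hm hm'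
end

section
/- Let K and K' be simplicial complexes on disjoint finite vertex sets. If K satisfies the Taylor upper bound and K' satisfies the Taylor upper bound, then the join K ⋆ K' satisfies the Taylor upper bound. -/
/-! The faces of maximal size of `K ⋆ K'` are the unions `F ∪ G` of faces of maximal size of
`K` and `K'`, so `f_{d-1}` is multiplicative and `n - d` is additive: it is `a + b` for the
values `a`, `b` of `K`, `K'`. Minimal non-faces of `K` and `K'` remain minimal non-faces of the
join, with disjoint supports, hence `M̃_j(K) + M̃_k(K') ≤ M̃_{j+k}(K ⋆ K')` for `j ≤ a`, `k ≤ b`.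
An induction over lattice paths turns this into
`C(a+b, a) ∏ M̃_j(K) ∏ M̃_k(K') ≤ ∏ M̃_m(K ⋆ K')`, and `(a+b)! = C(a+b, a) a! b!` combines the
bounds for `K` and `K'` into the bound for the join. -/

open Finset

/-- A simplicial complex on a finite vertex set: a collection of finite subsets
(faces) of the vertex set, closed under inclusion, containing every singleton. -/
structure SC (α : Type*) [DecidableEq α] where
  verts : Finset α
  faces : Finset (Finset α)
  subset_verts : ∀ F ∈ faces, F ⊆ verts
  down_closed : ∀ F ∈ faces, ∀ G, G ⊆ F → G ∈ faces
  singleton_mem : ∀ v ∈ verts, {v} ∈ faces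

namespace SC

variable {α : Type*} [DecidableEq α]

/-- `dimP1 K = dim K + 1`: the maximal number of vertices of a face. -/
def dimP1 (K : SC α) : ℕ := K.faces.sup Finset.card

/-- The number of faces with exactly `j` vertices, i.e. `f_{j-1}(K)`. -/
def fCard (K : SC α) (j : ℕ) : ℕ := (K.faces.filter (fun F => F.card = j)).card

/-- The minimal non-faces of `K`: subsets of the vertex set which are not faces,
all of whose proper subsets are faces. -/
def minNonFaces (K : SC α) : Finset (Finset α) :=
  K.verts.powerset.filter (fun F => F ∉ K.faces ∧ ∀ G ∈ F.powerset, G ≠ F → G ∈ K.faces)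

/-- The `i`-th minimal Taylor shift `m̃_i(K)`: the minimal number of vertices covered by
a set of exactly `i` minimal non-faces of `K`. -/
noncomputable def mT (K : SC α) (i : ℕ) : ℕ :=
  sInf {n | ∃ T ⊆ K.minNonFaces, T.card = i ∧ (T.sup id).card = n}

/-- The `i`-th maximal Taylor shift `M̃_i(K)`: the maximal number of vertices covered by
a set of exactly `i` minimal non-faces of `K`. -/
noncomputable def MT (K : SC α) (i : ℕ) : ℕ :=
  sSup {n | ∃ T ⊆ K.minNonFaces, T.card = i ∧ (T.sup id).card = n}

/-- The conjectured Taylor upper bound `(∏_{i=1}^{n-d} M̃_i(K))/(n-d)!` on `f_{d-1}(K)`. -/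
noncomputable def taylorUBval (K : SC α) : ℚ :=
  (∏ i ∈ Finset.Icc 1 (K.verts.card - K.dimP1), (K.MT i : ℚ)) /
    (Nat.factorial (K.verts.card - K.dimP1))

/-- The conjectured Taylor lower bound `(∏_{i=1}^{n-d} m̃_i(K))/(n-d)!` on `f_{d-1}(K)`. -/
noncomputable def taylorLBval (K : SC α) : ℚ :=
  (∏ i ∈ Finset.Icc 1 (K.verts.card - K.dimP1), (K.mT i : ℚ)) /
    (Nat.factorial (K.verts.card - K.dimP1))

/-- `K` satisfies the Taylor upper bound: `f_{d-1}(K) ≤ (∏_{i=1}^{n-d} M̃_i(K))/(n-d)!`. -/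
def TaylorUB (K : SC α) : Prop := (K.fCard K.dimP1 : ℚ) ≤ K.taylorUBval

/-- `K` satisfies the Taylor lower bound: `f_{d-1}(K) ≥ (∏_{i=1}^{n-d} m̃_i(K))/(n-d)!`. -/
def TaylorLB (K : SC α) : Prop := K.taylorLBval ≤ (K.fCard K.dimP1 : ℚ)

/-- The induced subcomplex `K[W]`: the faces of `K` contained in `W`. -/
def induced (K : SC α) (W : Finset α) : SC α where
  verts := K.verts ∩ W
  faces := K.faces.filter (fun F => F ⊆ W)
  subset_verts := by
    intro F hF
    simp only [mem_filter] at hF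
    exact subset_inter (K.subset_verts F hF.1) hF.2
  down_closed := by
    intro F hF G hG
    simp only [mem_filter] at hF ⊢
    exact ⟨K.down_closed F hF.1 G hG, hG.trans hF.2⟩
  singleton_mem := by
    intro v hv
    simp only [mem_inter] at hv
    simp only [mem_filter, singleton_subset_iff]
    exact ⟨K.singleton_mem v hv.1, hv.2⟩

end SC

namespace SC

variable {α : Type*} [DecidableEq α] (K : SC α)

theorem empty_mem_faces (hne : K.faces.Nonempty) : ∅ ∈ K.faces :=
  let ⟨F, hF⟩ := hne
  K.down_closed F hF ∅ (empty_subset F)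

theorem dimP1_le_card_verts : K.dimP1 ≤ #K.verts :=
  Finset.sup_le fun F hF => card_le_card (K.subset_verts F hF)

theorem fCard_dimP1_pos (hne : K.faces.Nonempty) : 0 < K.fCard K.dimP1 := by
  obtain ⟨F, hF, hcard⟩ := exists_mem_eq_sup _ hne Finset.card
  exact card_pos.mpr ⟨F, mem_filter.mpr ⟨hF, hcard.symm⟩⟩

theorem taylorUB_of_faces_eq_empty (h : K.faces = ∅) : TaylorUB K := by
  rw [TaylorUB, fCard, h, filter_empty, card_empty, Nat.cast_zero, taylorUBval]
  positivity

variable {K}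

theorem mem_minNonFaces {N : Finset α} :
    N ∈ K.minNonFaces ↔ N ⊆ K.verts ∧ N ∉ K.faces ∧ ∀ G ⊂ N, G ∈ K.faces := by
  simp [minNonFaces, ssubset_iff_subset_ne]

theorem sup_id_subset_verts {T : Finset (Finset α)} (hT : T ⊆ K.minNonFaces) :
    T.sup id ⊆ K.verts :=
  Finset.sup_le fun _ hN => (mem_minNonFaces.mp (hT hN)).1

variable (K)

theorem bddAbove_MT_set (i : ℕ) :
    BddAbove {n | ∃ T ⊆ K.minNonFaces, #T = i ∧ #(T.sup id) = n} := by
  refine ⟨#K.verts, ?_⟩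
  rintro n ⟨T, hT, -, rfl⟩
  exact card_le_card (sup_id_subset_verts hT)

theorem card_sup_id_le_MT {T : Finset (Finset α)} (hT : T ⊆ K.minNonFaces) :
    #(T.sup id) ≤ K.MT #T :=
  le_csSup (K.bddAbove_MT_set _) ⟨T, hT, rfl, rfl⟩

theorem exists_card_sup_id_eq_MT {i : ℕ} (hi : i ≤ #K.minNonFaces) :
    ∃ T ⊆ K.minNonFaces, #T = i ∧ #(T.sup id) = K.MT i := by
  obtain ⟨T, hT, hcard⟩ := exists_subset_card_eq hi
  exact Nat.sSup_mem (s := {n | ∃ T ⊆ K.minNonFaces, #T = i ∧ #(T.sup id) = n})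
    ⟨_, T, hT, hcard, rfl⟩ (K.bddAbove_MT_set i)

theorem MT_eq_zero_of_card_lt {i : ℕ} (hi : #K.minNonFaces < i) : K.MT i = 0 := by
  have hempty : {n | ∃ T ⊆ K.minNonFaces, #T = i ∧ #(T.sup id) = n} = ∅ :=
    Set.eq_empty_of_forall_notMem fun _ ⟨T, hT, hcard, _⟩ =>
      (card_le_card hT).not_gt (hcard ▸ hi)
  rw [MT, hempty, csSup_empty, Nat.bot_eq_zero]

/-- Otherwise `M̃_{n-d}(K) = 0` and the bound would read `f_{d-1}(K) ≤ 0`. -/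
theorem card_verts_sub_dimP1_le_card_minNonFaces (hne : K.faces.Nonempty) (hK : TaylorUB K) :
    #K.verts - K.dimP1 ≤ #K.minNonFaces := by
  by_contra! hlt
  have hzero : K.taylorUBval = 0 := by
    rw [taylorUBval, prod_eq_zero (i := #K.verts - K.dimP1) (by simp; omega)
      (by rw [K.MT_eq_zero_of_card_lt hlt, Nat.cast_zero]), zero_div]
  have hpos : (0 : ℚ) < K.fCard K.dimP1 := by exact_mod_cast K.fCard_dimP1_pos hne
  exact (hK.trans_eq hzero).not_gt hpos

end SC

/-- Split the lattice paths from `(0,0)` to `(a+1,b+1)` by their last step (Pascal's rule):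
the two families are bounded by induction, and their last factors `x (a+1)`, `y (b+1)` add up
to at most `z (a+b+2)`. -/
theorem choose_mul_prod_Icc_le_prod_Icc (x y z : ℕ → ℕ) :
    ∀ a b : ℕ, (∀ j ≤ a, ∀ k ≤ b, x j + y k ≤ z (j + k)) →
      (a + b).choose a * ((∏ j ∈ Icc 1 a, x j) * ∏ k ∈ Icc 1 b, y k) ≤
        ∏ m ∈ Icc 1 (a + b), z m
  | 0, b, h => by
    simpa using prod_le_prod' fun k hk =>
      le_add_self.trans (zero_add k ▸ h 0 le_rfl k (mem_Icc.1 hk).2)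
  | a + 1, 0, h => by
    simpa using prod_le_prod' fun j hj => le_self_add.trans (h j (mem_Icc.1 hj).2 0 le_rfl)
  | a + 1, b + 1, h => by
    have ih₁ := choose_mul_prod_Icc_le_prod_Icc x y z a (b + 1) fun j hj k hk =>
      h j (by omega) k hk
    have ih₂ := choose_mul_prod_Icc_le_prod_Icc x y z (a + 1) b fun j hj k hk =>
      h j hj k (by omega)
    have hlast := h (a + 1) le_rfl (b + 1) le_rfl
    rw [show a + (b + 1) = a + b + 1 by ring, prod_Icc_succ_top (by omega)] at ih₁
    rw [show a + 1 + b = a + b + 1 by ring, prod_Icc_succ_top (by omega)] at ih₂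
    rw [show a + 1 + (b + 1) = a + b + 1 + 1 by ring] at hlast ⊢
    rw [Nat.choose_succ_succ, prod_Icc_succ_top (by omega), prod_Icc_succ_top (by omega),
      prod_Icc_succ_top (by omega)]
    set P := ∏ m ∈ Icc 1 (a + b + 1), z m
    set X := ∏ j ∈ Icc 1 a, x j
    set Y := ∏ k ∈ Icc 1 b, y k
    calc _ = (a + b + 1).choose a * (X * (Y * y (b + 1))) * x (a + 1)
          + (a + b + 1).choose (a + 1) * (X * x (a + 1) * Y) * y (b + 1) := by ring
      _ ≤ P * x (a + 1) + P * y (b + 1) := by gcongr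
      _ ≤ P * z (a + b + 1 + 1) := by rw [← mul_add]; gcongr

theorem mul_le_div_factorial_add {𝕜 : Type*} [Field 𝕜] [LinearOrder 𝕜] [IsStrictOrderedRing 𝕜]
    {f f' P P' Q : 𝕜} {a b : ℕ} (hf : f ≤ P / a.factorial) (hf' : f' ≤ P' / b.factorial)
    (hf'0 : 0 ≤ f') (hP : 0 ≤ P) (hQ : (a + b).choose a * (P * P') ≤ Q) :
    f * f' ≤ Q / (a + b).factorial := by
  have hfact : ((a + b).factorial : 𝕜) = (a + b).choose a * a.factorial * b.factorial := by
    rw [add_comm a b, ← Nat.add_choose_mul_factorial_mul_factorial b a]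
    push_cast; ring
  have hchoose : ((a + b).choose a : 𝕜) ≠ 0 := by
    exact_mod_cast (Nat.choose_pos (Nat.le_add_right a b)).ne'
  calc f * f' ≤ P / a.factorial * (P' / b.factorial) :=
        mul_le_mul hf hf' hf'0 (by positivity)
    _ = (a + b).choose a * (P * P') / (a + b).factorial := by
        rw [hfact]; field_simp
    _ ≤ Q / (a + b).factorial := by gcongr

namespace SC

variable {α : Type*} [DecidableEq α]

structure IsJoin (K K' J : SC α) : Prop where
  disjoint : Disjoint K.verts K'.verts
  verts_eq : J.verts = K.verts ∪ K'.verts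
  faces_eq : J.faces = (K.faces ×ˢ K'.faces).image (fun p => p.1 ∪ p.2)

namespace IsJoin

variable {K K' J : SC α} (hJ : IsJoin K K' J)
include hJ

theorem mem_faces {H : Finset α} :
    H ∈ J.faces ↔ ∃ F ∈ K.faces, ∃ G ∈ K'.faces, F ∪ G = H := by
  simp [hJ.faces_eq, and_assoc]

theorem symm : IsJoin K' K J where
  disjoint := hJ.disjoint.symm
  verts_eq := hJ.verts_eq.trans (union_comm _ _)
  faces_eq := by
    ext H
    rw [hJ.mem_faces]
    simp only [mem_image, mem_product, Prod.exists]
    exact ⟨fun ⟨F, hF, G, hG, h⟩ => ⟨G, F, ⟨hG, hF⟩, (union_comm _ _).trans h⟩,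
      fun ⟨G, F, ⟨hG, hF⟩, h⟩ => ⟨F, hF, G, hG, (union_comm _ _).trans h⟩⟩

theorem disjoint_of_mem_faces {F G : Finset α} (hF : F ∈ K.faces) (hG : G ∈ K'.faces) :
    Disjoint F G :=
  hJ.disjoint.mono (K.subset_verts F hF) (K'.subset_verts G hG)

theorem union_inter_verts_left {F G : Finset α} (hF : F ∈ K.faces) (hG : G ∈ K'.faces) :
    (F ∪ G) ∩ K.verts = F := by
  rw [union_inter_distrib_right, inter_eq_left.mpr (K.subset_verts F hF),
    disjoint_iff_inter_eq_empty.mp (hJ.disjoint.symm.mono_left (K'.subset_verts G hG)),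
    union_empty]

theorem dimP1_eq (hne : K.faces.Nonempty) (hne' : K'.faces.Nonempty) :
    J.dimP1 = K.dimP1 + K'.dimP1 := by
  refine le_antisymm (Finset.sup_le fun H hH => ?_) ?_
  · obtain ⟨F, hF, G, hG, rfl⟩ := hJ.mem_faces.mp hH
    exact (card_union_le F G).trans (add_le_add (le_sup hF) (le_sup hG))
  · obtain ⟨F, hF, hcard⟩ := exists_mem_eq_sup _ hne Finset.card
    obtain ⟨G, hG, hcard'⟩ := exists_mem_eq_sup _ hne' Finset.card
    calc K.dimP1 + K'.dimP1 = #(F ∪ G) := by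
          rw [card_union_of_disjoint (hJ.disjoint_of_mem_faces hF hG), dimP1, dimP1, hcard,
            hcard']
      _ ≤ J.dimP1 := le_sup (hJ.mem_faces.mpr ⟨F, hF, G, hG, rfl⟩)

theorem card_verts_sub_dimP1 (hne : K.faces.Nonempty) (hne' : K'.faces.Nonempty) :
    #J.verts - J.dimP1 = (#K.verts - K.dimP1) + (#K'.verts - K'.dimP1) := by
  rw [hJ.dimP1_eq hne hne', hJ.verts_eq, card_union_of_disjoint hJ.disjoint]
  have := K.dimP1_le_card_verts
  have := K'.dimP1_le_card_verts
  omega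

theorem fCard_dimP1_eq (hne : K.faces.Nonempty) (hne' : K'.faces.Nonempty) :
    J.fCard J.dimP1 = K.fCard K.dimP1 * K'.fCard K'.dimP1 := by
  have htop : J.faces.filter (fun H => #H = J.dimP1) =
      ((K.faces.filter (fun F => #F = K.dimP1)) ×ˢ
        (K'.faces.filter (fun G => #G = K'.dimP1))).image (fun p => p.1 ∪ p.2) := by
    ext H
    simp only [mem_filter, mem_image, mem_product, Prod.exists, hJ.dimP1_eq hne hne']
    constructor
    · rintro ⟨hH, hcard⟩
      obtain ⟨F, hF, G, hG, rfl⟩ := hJ.mem_faces.mp hH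
      rw [card_union_of_disjoint (hJ.disjoint_of_mem_faces hF hG)] at hcard
      have : #F ≤ K.dimP1 := le_sup hF
      have : #G ≤ K'.dimP1 := le_sup hG
      exact ⟨F, G, ⟨⟨hF, by omega⟩, hG, by omega⟩, rfl⟩
    · rintro ⟨F, G, ⟨⟨hF, hcard⟩, hG, hcard'⟩, rfl⟩
      exact ⟨hJ.mem_faces.mpr ⟨F, hF, G, hG, rfl⟩,
        by rw [card_union_of_disjoint (hJ.disjoint_of_mem_faces hF hG), hcard, hcard']⟩
  rw [fCard, htop, card_image_of_injOn, card_product, fCard, fCard]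
  rintro ⟨F, G⟩ hFG ⟨F', G'⟩ hFG' heq
  simp only [coe_product, Set.mem_prod, coe_filter] at hFG hFG' heq
  obtain ⟨⟨hF, -⟩, hG, -⟩ := hFG
  obtain ⟨⟨hF', -⟩, hG', -⟩ := hFG'
  have hFF' : F = F' := by
    rw [← hJ.union_inter_verts_left hF hG, heq, hJ.union_inter_verts_left hF' hG']
  have hGG' : G = G' := by
    rw [← hJ.symm.union_inter_verts_left hG hF, union_comm, heq, union_comm,
      hJ.symm.union_inter_verts_left hG' hF']
  rw [hFF', hGG']

theorem mem_faces_iff_of_subset_left (hne' : K'.faces.Nonempty) {N : Finset α}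
    (hN : N ⊆ K.verts) : N ∈ J.faces ↔ N ∈ K.faces := by
  refine ⟨fun h => ?_, fun h =>
    hJ.mem_faces.mpr ⟨N, h, ∅, K'.empty_mem_faces hne', union_empty N⟩⟩
  obtain ⟨F, hF, G, hG, rfl⟩ := hJ.mem_faces.mp h
  have hG0 : G = ∅ := (disjoint_self_iff_empty G).mp
    (hJ.disjoint.mono (subset_union_right.trans hN) (K'.subset_verts G hG))
  rwa [hG0, union_empty]

theorem minNonFaces_subset_left (hne' : K'.faces.Nonempty) :
    K.minNonFaces ⊆ J.minNonFaces := by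
  intro N hN
  obtain ⟨hNV, hNF, hsub⟩ := mem_minNonFaces.mp hN
  refine mem_minNonFaces.mpr ⟨hNV.trans (hJ.verts_eq ▸ subset_union_left),
    (hJ.mem_faces_iff_of_subset_left hne' hNV).not.mpr hNF, fun G hG => ?_⟩
  exact (hJ.mem_faces_iff_of_subset_left hne' (hG.subset.trans hNV)).mpr (hsub G hG)

theorem MT_add_le (hne : K.faces.Nonempty) (hne' : K'.faces.Nonempty) {j k : ℕ}
    (hj : j ≤ #K.minNonFaces) (hk : k ≤ #K'.minNonFaces) :
    K.MT j + K'.MT k ≤ J.MT (j + k) := by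
  obtain ⟨T, hT, hcard, hMT⟩ := K.exists_card_sup_id_eq_MT hj
  obtain ⟨T', hT', hcard', hMT'⟩ := K'.exists_card_sup_id_eq_MT hk
  have hdisjT : Disjoint T T' := disjoint_left.mpr fun N hN hN' => by
    have hN0 : N = ∅ := (disjoint_self_iff_empty N).mp (hJ.disjoint.mono
      (mem_minNonFaces.mp (hT hN)).1 (mem_minNonFaces.mp (hT' hN')).1)
    exact (mem_minNonFaces.mp (hT hN)).2.1 (hN0 ▸ K.empty_mem_faces hne)
  have hunion : T ∪ T' ⊆ J.minNonFaces :=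
    union_subset (hT.trans (hJ.minNonFaces_subset_left hne'))
      (hT'.trans (hJ.symm.minNonFaces_subset_left hne))
  calc K.MT j + K'.MT k = #((T ∪ T').sup id) := by
        rw [sup_union, ← hMT, ← hMT']
        exact (card_union_of_disjoint
          (hJ.disjoint.mono (sup_id_subset_verts hT) (sup_id_subset_verts hT'))).symm
    _ ≤ J.MT (j + k) := by
        rw [← hcard, ← hcard', ← card_union_of_disjoint hdisjT]
        exact J.card_sup_id_le_MT hunion

end IsJoin

end SC

open SC in
/-- If `K` and `K'` are simplicial complexes on disjoint vertex sets and both satisfy the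
Taylor upper bound, then their join `J = K ⋆ K'` satisfies the Taylor upper bound. -/
theorem taylorUB_join {α : Type*} [DecidableEq α] (K K' J : SC α)
    (hdisj : Disjoint K.verts K'.verts)
    (hV : J.verts = K.verts ∪ K'.verts)
    (hF : J.faces = (K.faces ×ˢ K'.faces).image (fun p => p.1 ∪ p.2))
    (hK : TaylorUB K) (hK' : TaylorUB K') :
    TaylorUB J := by
  have hJ : IsJoin K K' J := ⟨hdisj, hV, hF⟩
  rcases K.faces.eq_empty_or_nonempty with hempty | hne
  · exact J.taylorUB_of_faces_eq_empty (by simp [hF, hempty])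
  rcases K'.faces.eq_empty_or_nonempty with hempty' | hne'
  · exact J.taylorUB_of_faces_eq_empty (by simp [hF, hempty'])
  have hshift := choose_mul_prod_Icc_le_prod_Icc K.MT K'.MT J.MT _ _ fun j hj k hk =>
    hJ.MT_add_le hne hne' (hj.trans (K.card_verts_sub_dimP1_le_card_minNonFaces hne hK))
      (hk.trans (K'.card_verts_sub_dimP1_le_card_minNonFaces hne' hK'))
  rw [TaylorUB, taylorUBval, hJ.card_verts_sub_dimP1 hne hne', hJ.fCard_dimP1_eq hne hne',
    Nat.cast_mul]
  exact mul_le_div_factorial_add hK hK' (Nat.cast_nonneg _) (by positivity)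
    (by exact_mod_cast hshift)
end

section
/- Let K be a simplicial complex of dimension d−1 with n > d vertices such that M̃_{n−d}(K) = n. If for every vertex v of K the induced subcomplex K − v satisfies the Taylor upper bound, then K satisfies the Taylor upper bound. -/
open Finset

namespace SC

variable {α : Type*} [DecidableEq α]

/-!
Double counting gives `(n - d) f_{d-1}(K) = ∑_v f_{d-1}(K - v)`. Each `K - v` has `n - 1`
vertices, its minimal non-faces are minimal non-faces of `K`, so `M̃_i(K - v) ≤ M̃_i(K)`, and its
Taylor upper bound gives `f_{d-1}(K - v) (n-d-1)! ≤ ∏_{i < n-d} M̃_i(K)`. Summing over the `n`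
vertices and using `M̃_{n-d}(K) = n` to absorb the factor `n` yields the bound for `K`.
-/

open scoped Nat

lemma minNonFaces_induced_subset (K : SC α) (W : Finset α) :
    (K.induced W).minNonFaces ⊆ K.minNonFaces := by
  intro F hF
  simp only [minNonFaces, induced, mem_filter, mem_powerset, subset_inter_iff] at hF ⊢
  obtain ⟨⟨hFV, hFW⟩, hnot, hmin⟩ := hF
  exact ⟨hFV, fun hmem => hnot ⟨hmem, hFW⟩, fun G hG hne => (hmin G hG hne).1⟩

lemma sup_card_le_of_subset_minNonFaces (K : SC α) {T : Finset (Finset α)}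
    (hT : T ⊆ K.minNonFaces) : (T.sup id).card ≤ K.verts.card :=
  card_le_card <| Finset.sup_le fun _ hF => (mem_powerset.mp (mem_filter.mp (hT hF)).1)

lemma MT_induced_le (K : SC α) (W : Finset α) (i : ℕ) :
    (K.induced W).MT i ≤ K.MT i := by
  unfold MT
  rcases Set.eq_empty_or_nonempty
      {n | ∃ T ⊆ (K.induced W).minNonFaces, T.card = i ∧ (T.sup id).card = n} with hS | hS
  · simp [hS]
  · refine csSup_le_csSup ⟨K.verts.card, ?_⟩ hS ?_
    · rintro m ⟨T, hT, -, rfl⟩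
      exact K.sup_card_le_of_subset_minNonFaces hT
    · rintro m ⟨T, hT, hc, rfl⟩
      exact ⟨T, hT.trans (K.minNonFaces_induced_subset W), hc, rfl⟩

lemma dimP1_induced_le (K : SC α) (W : Finset α) : (K.induced W).dimP1 ≤ K.dimP1 :=
  Finset.sup_mono (filter_subset _ _)

lemma fCard_eq_zero_of_dimP1_lt (K : SC α) {j : ℕ} (hj : K.dimP1 < j) : K.fCard j = 0 := by
  rw [fCard, card_eq_zero, filter_eq_empty_iff]
  intro F hF hc
  have : F.card ≤ K.dimP1 := Finset.le_sup hF
  omega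

lemma card_verts_induced_erase (K : SC α) {v : α} (hv : v ∈ K.verts) :
    (K.induced (K.verts.erase v)).verts.card = K.verts.card - 1 := by
  show (K.verts ∩ K.verts.erase v).card = _
  rw [inter_eq_right.mpr (erase_subset _ _), card_erase_of_mem hv]

lemma fCard_induced_erase (K : SC α) (v : α) (j : ℕ) :
    (K.induced (K.verts.erase v)).fCard j
      = ((K.faces.filter (fun F => F.card = j)).filter (fun F => v ∉ F)).card := by
  simp only [fCard, induced, filter_filter]
  congr 1
  ext F
  simp only [mem_filter]
  constructor
  · rintro ⟨hF, hsub, hc⟩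
    exact ⟨hF, hc, fun hv => (mem_erase.mp (hsub hv)).1 rfl⟩
  · rintro ⟨hF, hc, hv⟩
    exact ⟨hF, fun x hx => mem_erase.mpr ⟨fun hxv => hv (hxv ▸ hx), K.subset_verts F hF hx⟩, hc⟩

/-- Each face with `j` vertices survives in exactly `n - j` of the vertex deletions. -/
lemma sum_fCard_induced_erase (K : SC α) (j : ℕ) :
    ∑ v ∈ K.verts, (K.induced (K.verts.erase v)).fCard j = (K.verts.card - j) * K.fCard j := by
  simp_rw [fCard_induced_erase, card_filter]
  rw [sum_comm, fCard, mul_comm]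
  refine sum_const_nat fun F hF => ?_
  obtain ⟨hF, hc⟩ := mem_filter.mp hF
  rw [← card_filter, filter_not, filter_mem_eq_inter, inter_eq_right.mpr (K.subset_verts F hF),
    card_sdiff_of_subset (K.subset_verts F hF), hc]

lemma fCard_dimP1_mul_factorial_le (K : SC α) (hK : TaylorUB K) :
    (K.fCard K.dimP1 : ℚ) * (K.verts.card - K.dimP1)! ≤
      ∏ i ∈ Icc 1 (K.verts.card - K.dimP1), (K.MT i : ℚ) :=
  (le_div_iff₀ (by positivity)).mp hK

/-- Maximal shifts only grow when passing to `K`; if the dimension drops, the left side is `0`. -/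
lemma fCard_induced_mul_factorial_le (K : SC α) {W : Finset α} (hW : TaylorUB (K.induced W)) :
    ((K.induced W).fCard K.dimP1 : ℚ) * ((K.induced W).verts.card - K.dimP1)! ≤
      ∏ i ∈ Icc 1 ((K.induced W).verts.card - K.dimP1), (K.MT i : ℚ) := by
  rcases (K.dimP1_induced_le W).lt_or_eq with hlt | heq
  · rw [fCard_eq_zero_of_dimP1_lt _ hlt, Nat.cast_zero, zero_mul]
    positivity
  · rw [← heq]
    refine (fCard_dimP1_mul_factorial_le _ hW).trans ?_
    gcongr with i
    exact K.MT_induced_le W i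

end SC

open Nat SC in
/-- If `K` has dimension `d-1`, `n > d` vertices, `M̃_{n-d}(K) = n`, and every vertex-deleted
induced subcomplex `K - v` satisfies the Taylor upper bound, then so does `K`. -/
theorem taylorUB_of_vertex_deletions {α : Type*} [DecidableEq α] (K : SC α) (d : ℕ)
    (hdim : K.dimP1 = d) (hn : d < K.verts.card)
    (hM : K.MT (K.verts.card - d) = K.verts.card)
    (h : ∀ v ∈ K.verts, TaylorUB (K.induced (K.verts.erase v))) :
    TaylorUB K := by
  subst hdim
  set n := K.verts.card
  obtain ⟨e, he⟩ : ∃ e, n - K.dimP1 = e + 1 := ⟨n - K.dimP1 - 1, by omega⟩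
  set P : ℚ := ∏ i ∈ Icc 1 e, (K.MT i : ℚ)
  have hdel : ∀ v ∈ K.verts, ((K.induced (K.verts.erase v)).fCard K.dimP1 : ℚ) * e ! ≤ P := by
    intro v hv
    have := K.fCard_induced_mul_factorial_le (h v hv)
    rwa [K.card_verts_induced_erase hv, show n - 1 - K.dimP1 = e by omega] at this
  have hcount : ((e + 1 : ℕ) : ℚ) * K.fCard K.dimP1 =
      ∑ v ∈ K.verts, ((K.induced (K.verts.erase v)).fCard K.dimP1 : ℚ) := by
    rw [← he]
    exact_mod_cast (K.sum_fCard_induced_erase K.dimP1).symm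
  have htop : ∏ i ∈ Icc 1 (e + 1), (K.MT i : ℚ) = P * n := by
    rw [prod_Icc_succ_top (by omega), ← he, hM]
  rw [TaylorUB, taylorUBval, he, htop, le_div_iff₀ (by positivity), factorial_succ, cast_mul,
    ← mul_assoc, mul_comm (K.fCard _ : ℚ), hcount, sum_mul]
  calc ∑ v ∈ K.verts, ((K.induced (K.verts.erase v)).fCard K.dimP1 : ℚ) * e !
      ≤ ∑ _v ∈ K.verts, P := sum_le_sum hdel
    _ = P * n := by rw [sum_const, nsmul_eq_mul, mul_comm]
end

section
/- Let K be a simplicial complex of dimension d−1 (d ≥ 1) with n vertices, where n > 24d + 3. Then K satisfies the Taylor lower bound strictly: f_{d−1}(K) > (∏_{i=1}^{n−d} m̃_i(K))/(n−d)!. -/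
open Finset

/-!
A maximal subset `S` of a vertex set `W` containing no minimal non-face is a face, so
`|S| ≤ d`; for each `v ∈ W \ S`, the set `S ∪ {v}` contains a minimal non-face through `v`
that meets `S`, and these are distinct for distinct `v`. Induction on `W \ S` shows that `W`
contains at least `(|W| - d)² / 2d` minimal non-faces, hence `m̃_i ≤ d + √(2di) + 1`.
Once `n - d ≥ 23d + 4` this is at most `5(n - d)/14 < (n - d)/e`, so
`∏ m̃_i < (n - d)! ≤ f_{d-1} (n - d)!`.
-/

open scoped Nat

lemma sq_le_tsub_sq_add (b d : ℕ) : b ^ 2 ≤ (b - d) ^ 2 + 2 * d * b := by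
  rcases le_total d b with h | h
  · obtain ⟨e, rfl⟩ := Nat.exists_eq_add_of_le h
    rw [Nat.add_sub_cancel_left]
    nlinarith
  · rw [Nat.sub_eq_zero_of_le h]
    nlinarith

lemma div_exp_one_pow_le_factorial (n : ℕ) : ((n : ℝ) / Real.exp 1) ^ n ≤ n ! := by
  have h := Real.pow_div_factorial_le_exp _ (Nat.cast_nonneg n) n
  rw [div_le_iff₀ (by positivity), mul_comm] at h
  rw [div_pow, ← Real.exp_nat_mul, mul_one, div_le_iff₀ (by positivity)]
  exact h

lemma pow_lt_factorial_of_fourteen_mul_le {c m : ℕ} (hm : m ≠ 0) (h : 14 * c ≤ 5 * m) :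
    c ^ m < m ! := by
  have he : Real.exp 1 < 14 / 5 := Real.exp_one_lt_d9.trans (by norm_num)
  have hc : (c : ℝ) ≤ 5 * m / 14 := by
    rw [le_div_iff₀ (by norm_num)]
    exact_mod_cast (by omega : c * 14 ≤ 5 * m)
  have hlt : (5 * m / 14 : ℝ) < m / Real.exp 1 := by
    have : (0 : ℝ) < m := by positivity
    rw [div_lt_div_iff₀ (by norm_num) (Real.exp_pos 1)]
    nlinarith
  exact_mod_cast calc (c : ℝ) ^ m ≤ (5 * m / 14) ^ m := pow_le_pow_left₀ c.cast_nonneg hc m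
    _ < (m / Real.exp 1) ^ m := pow_lt_pow_left₀ hlt (by positivity) hm
    _ ≤ m ! := div_exp_one_pow_le_factorial m

lemma fourteen_mul_add_sqrt_le {d m : ℕ} (hm : 23 * d + 4 ≤ m) :
    14 * (d + Nat.sqrt (2 * d * m) + 1) ≤ 5 * m := by
  obtain ⟨s, rfl⟩ := Nat.exists_eq_add_of_le hm
  have hk := Nat.sqrt_le (2 * d * (23 * d + 4 + s))
  generalize Nat.sqrt (2 * d * (23 * d + 4 + s)) = k at hk ⊢
  by_contra! h
  -- `101 d + 6 + 5 s = 5 m - 14 (d + 1)`, whose square dominates `196 · 2 d m` termwise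
  have h' : 101 * d + 6 + 5 * s < 14 * k := by omega
  nlinarith [Nat.mul_self_lt_mul_self h', Nat.zero_le (d * s), Nat.zero_le (s * s), Nat.zero_le d]

namespace SC

variable {α : Type*} [DecidableEq α] (K : SC α)

def minNonFacesIn (W : Finset α) : Finset (Finset α) := K.minNonFaces.filter (· ⊆ W)

lemma card_le_dimP1 {S : Finset α} (hS : S ∈ K.faces) : S.card ≤ K.dimP1 := le_sup hS

lemma fCard_dimP1_pos_s10 (hv : K.verts.Nonempty) : 0 < K.fCard K.dimP1 := by
  obtain ⟨v, hv⟩ := hv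
  obtain ⟨F, hF, hFd⟩ := exists_mem_eq_sup K.faces ⟨{v}, K.singleton_mem v hv⟩ card
  exact card_pos.2 ⟨F, mem_filter.2 ⟨hF, hFd.symm⟩⟩

lemma not_subset_singleton_of_mem_minNonFaces {G : Finset α} {v : α} (hv : v ∈ K.verts)
    (hG : G ∈ K.minNonFaces) : ¬ G ⊆ {v} := fun hGv =>
  (mem_filter.1 hG).2.1 (K.down_closed _ (K.singleton_mem v hv) G hGv)

lemma mem_faces_of_forall_not_subset {S : Finset α} (hS : S ⊆ K.verts)
    (h : ∀ G ∈ K.minNonFaces, ¬ G ⊆ S) : S ∈ K.faces := by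
  induction S using Finset.strongInduction with
  | H S ih =>
    by_contra hSf
    refine h S ?_ subset_rfl
    simp only [minNonFaces, mem_filter, mem_powerset]
    exact ⟨hS, hSf, fun T hTS hTne => ih T (ssubset_of_subset_of_ne hTS hTne) (hTS.trans hS)
      fun G hG hGT => h G hG (hGT.trans hTS)⟩

lemma card_minNonFacesIn_sdiff_add_card_sdiff_le {S W : Finset α} (hW : W ⊆ K.verts)
    (hSW : S ⊆ W) (hS : ∀ G ∈ K.minNonFaces, ¬ G ⊆ S)
    (hmax : ∀ v ∈ W \ S, ∃ G ∈ K.minNonFaces, G ⊆ insert v S) :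
    (K.minNonFacesIn (W \ S)).card + (W \ S).card ≤ (K.minNonFacesIn W).card := by
  set A : α → Finset (Finset α) := fun v => K.minNonFacesIn (insert v S)
  have hA : ∀ v ∈ W \ S, (A v).Nonempty := fun v hv => by
    obtain ⟨G, hG, hGv⟩ := hmax v hv
    exact ⟨G, mem_filter.2 ⟨hG, hGv⟩⟩
  have hdisj : (↑(W \ S) : Set α).PairwiseDisjoint A := by
    intro u hu v hv huv
    refine disjoint_left.2 fun G hGu hGv => hS G (mem_filter.1 hGu).1 fun x hx => ?_
    have hxu := (mem_filter.1 hGu).2 hx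
    have hxv := (mem_filter.1 hGv).2 hx
    rw [mem_insert] at hxu hxv
    rcases hxu with rfl | hxS
    · exact hxv.resolve_left huv
    · exact hxS
  have hnew : (W \ S).biUnion A ⊆ K.minNonFacesIn W \ K.minNonFacesIn (W \ S) := by
    intro G hG
    obtain ⟨v, hv, hGA⟩ := mem_biUnion.1 hG
    obtain ⟨hGm, hGv⟩ := mem_filter.1 hGA
    obtain ⟨hvW, hvS⟩ := mem_sdiff.1 hv
    refine mem_sdiff.2
      ⟨mem_filter.2 ⟨hGm, hGv.trans (insert_subset hvW hSW)⟩, fun hGWS => ?_⟩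
    refine K.not_subset_singleton_of_mem_minNonFaces (hW hvW) hGm fun x hx => ?_
    rcases mem_insert.1 (hGv hx) with rfl | hxS
    · exact mem_singleton_self x
    · exact absurd hxS (mem_sdiff.1 ((mem_filter.1 hGWS).2 hx)).2
  have hmono : K.minNonFacesIn (W \ S) ⊆ K.minNonFacesIn W :=
    fun G hG => mem_filter.2 ⟨(mem_filter.1 hG).1, (mem_filter.1 hG).2.trans sdiff_subset⟩
  calc (K.minNonFacesIn (W \ S)).card + (W \ S).card
      ≤ (K.minNonFacesIn (W \ S)).card + ((W \ S).biUnion A).card := by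
        gcongr
        exact card_le_card_biUnion hdisj hA
    _ ≤ (K.minNonFacesIn (W \ S)).card + (K.minNonFacesIn W \ K.minNonFacesIn (W \ S)).card := by
        gcongr
    _ = (K.minNonFacesIn W).card := by
        rw [card_sdiff_of_subset hmono]
        have := card_le_card hmono
        omega

lemma exists_face_card_minNonFacesIn_sdiff_add_le {W : Finset α} (hW : W ⊆ K.verts)
    (hne : W.Nonempty) : ∃ S ⊆ W, S.Nonempty ∧ S ∈ K.faces ∧
      (K.minNonFacesIn (W \ S)).card + (W \ S).card ≤ (K.minNonFacesIn W).card := by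
  set I := W.powerset.filter fun S => ∀ G ∈ K.minNonFaces, ¬ G ⊆ S
  obtain ⟨v, hv⟩ := hne
  have hvI : {v} ∈ I := mem_filter.2 ⟨mem_powerset.2 (singleton_subset_iff.2 hv),
    fun G hG => K.not_subset_singleton_of_mem_minNonFaces (hW hv) hG⟩
  obtain ⟨S, hSI, hSmax⟩ := exists_max_image I card ⟨_, hvI⟩
  obtain ⟨hSW, hS⟩ := mem_filter.1 hSI
  rw [mem_powerset] at hSW
  refine ⟨S, hSW, card_pos.1 ?_, K.mem_faces_of_forall_not_subset (hSW.trans hW) hS,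
    K.card_minNonFacesIn_sdiff_add_card_sdiff_le hW hSW hS fun u hu => ?_⟩
  · simpa using hSmax _ hvI
  · obtain ⟨huW, huS⟩ := mem_sdiff.1 hu
    by_contra! h
    have := hSmax (insert u S) (mem_filter.2 ⟨mem_powerset.2 (insert_subset huW hSW), h⟩)
    rw [card_insert_of_notMem huS] at this
    omega

theorem sq_card_sub_dimP1_le {W : Finset α} (hW : W ⊆ K.verts) :
    (W.card - K.dimP1) ^ 2 ≤ 2 * K.dimP1 * (K.minNonFacesIn W).card := by
  induction W using Finset.strongInduction with
  | H W ih =>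
    rcases W.eq_empty_or_nonempty with rfl | hne
    · simp
    obtain ⟨S, hSW, hSne, hS, hcard⟩ := K.exists_face_card_minNonFacesIn_sdiff_add_le hW hne
    have ih' := ih (W \ S) (sdiff_ssubset hSW hSne) (sdiff_subset.trans hW)
    have hs := K.card_le_dimP1 hS
    rw [card_sdiff_of_subset hSW] at ih' hcard
    calc (W.card - K.dimP1) ^ 2 ≤ (W.card - S.card) ^ 2 := Nat.pow_le_pow_left (by omega) 2
      _ ≤ (W.card - S.card - K.dimP1) ^ 2 + 2 * K.dimP1 * (W.card - S.card) :=
        sq_le_tsub_sq_add _ _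
      _ ≤ 2 * K.dimP1 * (K.minNonFacesIn (W \ S)).card + 2 * K.dimP1 * (W.card - S.card) := by
        gcongr
      _ ≤ 2 * K.dimP1 * (K.minNonFacesIn W).card := by
        rw [← mul_add]
        gcongr

lemma mT_le_card {W : Finset α} {i : ℕ} (hi : i ≤ (K.minNonFacesIn W).card) :
    K.mT i ≤ W.card := by
  obtain ⟨T, hT, rfl⟩ := exists_subset_card_eq hi
  have hTW : T.sup id ⊆ W := Finset.sup_le fun G hG => (mem_filter.1 (hT hG)).2
  have hmT : K.mT T.card ≤ (T.sup id).card :=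
    Nat.sInf_le ⟨T, hT.trans (filter_subset _ _), rfl, rfl⟩
  exact hmT.trans (card_le_card hTW)

lemma mT_le_of_lt_sq {c i : ℕ} (hc : c ≤ K.verts.card)
    (hi : 2 * K.dimP1 * i < (c - K.dimP1) ^ 2) : K.mT i ≤ c := by
  obtain ⟨W, hW, rfl⟩ := exists_subset_card_eq hc
  exact K.mT_le_card (Nat.lt_of_mul_lt_mul_left (hi.trans_le (K.sq_card_sub_dimP1_le hW))).le

end SC

open SC in
theorem taylorLB_strict_of_large_general {α : Type*} [DecidableEq α] (K : SC α) (d : ℕ)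
    (hdim : K.dimP1 = d) (hn : 24 * d + 3 < K.verts.card) :
    K.taylorLBval < (K.fCard d : ℚ) := by
  subst hdim
  set m := K.verts.card - K.dimP1 with hm
  set C := K.dimP1 + Nat.sqrt (2 * K.dimP1 * m) + 1
  have hC : 14 * C ≤ 5 * m := fourteen_mul_add_sqrt_le (by omega)
  have hmT : ∀ i ∈ Icc 1 m, K.mT i ≤ C := fun i hi => K.mT_le_of_lt_sq (by omega) <|
    calc 2 * K.dimP1 * i ≤ 2 * K.dimP1 * m := by gcongr; exact (mem_Icc.1 hi).2
      _ < (C - K.dimP1) ^ 2 := by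
        rw [show C - K.dimP1 = Nat.sqrt (2 * K.dimP1 * m) + 1 by omega]
        exact Nat.lt_succ_sqrt' _
  have hprod : ∏ i ∈ Icc 1 m, K.mT i < K.fCard K.dimP1 * m ! := calc
    _ ≤ C ^ m := by simpa using prod_le_pow_card _ _ _ hmT
    _ < m ! := pow_lt_factorial_of_fourteen_mul_le (by omega) hC
    _ ≤ _ := Nat.le_mul_of_pos_left _ (K.fCard_dimP1_pos_s10 (card_pos.1 (by omega)))
  rw [taylorLBval, ← hm, div_lt_iff₀ (by positivity)]
  exact_mod_cast hprod

open SC in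
/-- A simplicial complex of dimension `d-1` on more than `24d + 3` vertices satisfies the
Taylor lower bound strictly. -/
theorem taylorLB_strict_of_large {α : Type*} [DecidableEq α] (K : SC α) (d : ℕ)
    (hd : 1 ≤ d) (hdim : K.dimP1 = d) (hn : 24 * d + 3 < K.verts.card) :
    K.taylorLBval < (K.fCard d : ℚ) :=
  taylorLB_strict_of_large_general K d hdim hn
end

section
/- Let d ≥ 1 and let K be a completely balanced simplicial complex of dimension d−1 on n vertices, i.e., the vertices of K can be colored with d colors so that every face of K contains at most one vertex of each color. If n ≥ 3d, then m̃_r(K) ≤ r + 1 for every 1 ≤ r ≤ n−d; consequently (∏_{r=1}^{n−d} m̃_r(K))/(n−d)! ≤ n − d + 1. -/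
open Finset

/-!
Two vertices of the same colour never lie in a common face, so each such pair is a minimal
non-face, and `m̃_r(K) ≤ r + 1` as soon as some `r + 1` vertices span `r` monochromatic pairs.
Such vertices are found by filling colour classes one at a time, the smallest class last: a class
of size `c` spans `C(c, 2) ≥ 2c - 3` pairs, so whole classes of average size at least `3` span at
least as many pairs as they have vertices, and a partially filled class of size `j` loses at most
one, as `C(j, 2) ≥ j - 1`. The bound on the Taylor value then follows from
`∏_{r=1}^{N} (r + 1) = (N + 1)!`.
-/

namespace Nat

theorem le_choose_two_add_one (n : ℕ) : n ≤ n.choose 2 + 1 := by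
  induction n with
  | zero => simp
  | succ n ih =>
    have : (n + 1).choose 2 = n + n.choose 2 := by rw [Nat.choose_succ_succ', Nat.choose_one_right]
    omega

theorem two_mul_le_choose_two_add_three (n : ℕ) : 2 * n ≤ n.choose 2 + 3 := by
  induction n with
  | zero => simp
  | succ n ih =>
    have : (n + 1).choose 2 = n + n.choose 2 := by rw [Nat.choose_succ_succ', Nat.choose_one_right]
    omega

end Nat

namespace Finset

variable {ι : Type*}

theorem sum_le_sum_choose_two {s : Finset ι} {c : ι → ℕ} (hs : 3 * #s ≤ ∑ i ∈ s, c i) :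
    ∑ i ∈ s, c i ≤ ∑ i ∈ s, (c i).choose 2 := by
  have : ∑ i ∈ s, 2 * c i ≤ ∑ i ∈ s, ((c i).choose 2 + 3) :=
    sum_le_sum fun i _ => Nat.two_mul_le_choose_two_add_three (c i)
  rw [← mul_sum, sum_add_distrib, sum_const, smul_eq_mul] at this
  omega

theorem exists_le_sum_choose_two_add_one [DecidableEq ι] (c : ι → ℕ) (s : Finset ι)
    (hs : 3 * #s ≤ ∑ i ∈ s, c i) {m : ℕ} (hm : m ≤ ∑ i ∈ s, c i) :
    ∃ w : ι → ℕ, (∀ i, w i ≤ c i) ∧ ∑ i ∈ s, w i = m ∧ m ≤ ∑ i ∈ s, (w i).choose 2 + 1 := by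
  induction s using Finset.induction_on_min_value c generalizing m with
  | empty => exact ⟨0, fun _ => Nat.zero_le _, by simp at hm ⊢; omega, by simp at hm ⊢; omega⟩
  | insert a s ha hmin ih =>
    rw [sum_insert ha] at hm
    rw [card_insert_of_notMem ha, sum_insert ha] at hs
    have sum_update (f : ι → ℕ) (x : ℕ) (g : ℕ → ℕ) :
        ∑ i ∈ insert a s, g (Function.update f a x i) = g x + ∑ i ∈ s, g (f i) := by
      rw [sum_insert ha, Function.update_self]
      exact congrArg _ <| sum_congr rfl fun i hi => by
        rw [Function.update_of_ne (ne_of_mem_of_not_mem hi ha)]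
    have update_le (f : ι → ℕ) (x : ℕ) (hf : ∀ i, f i ≤ c i) (hx : x ≤ c a) (i : ι) :
        Function.update f a x i ≤ c i := by
      rcases eq_or_ne i a with rfl | hi
      · simpa using hx
      · simpa [hi] using hf i
    -- removing a smallest class keeps the average class size at least 3
    have hs' : 3 * #s ≤ ∑ i ∈ s, c i := by
      by_cases hca : 3 ≤ c a
      · calc 3 * #s ≤ #s • c a := by rw [smul_eq_mul, mul_comm]; exact Nat.mul_le_mul_left _ hca
          _ ≤ ∑ i ∈ s, c i := card_nsmul_le_sum s c (c a) hmin
      · omega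
    by_cases hms : m ≤ ∑ i ∈ s, c i
    · obtain ⟨w, hwc, hwm, hwC⟩ := ih hs' hms
      refine ⟨Function.update w a 0, update_le w 0 hwc (Nat.zero_le _), ?_, ?_⟩
      · exact (sum_update w 0 id).trans (by simpa using hwm)
      · exact (sum_update w 0 (Nat.choose · 2) ▸ by simpa using hwC)
    · refine ⟨Function.update c a (m - ∑ i ∈ s, c i), update_le c _ (fun _ => le_rfl) (by omega),
        ?_, ?_⟩
      · exact (sum_update c _ id).trans (by simp only [id]; omega)
      · refine (sum_update c _ (Nat.choose · 2)).symm ▸ ?_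
        have := Nat.le_choose_two_add_one (m - ∑ i ∈ s, c i)
        have := sum_le_sum_choose_two hs'
        omega

theorem card_biUnion_powersetCard {α : Type*} [DecidableEq α] {s : Finset ι} {U : ι → Finset α}
    (hU : (s : Set ι).PairwiseDisjoint U) {k : ℕ} (hk : k ≠ 0) :
    #(s.biUnion fun i => (U i).powersetCard k) = ∑ i ∈ s, (#(U i)).choose k := by
  rw [card_biUnion]
  · simp only [card_powersetCard]
  · intro i hi j hj hij
    refine disjoint_left.2 fun e hei hej => ?_
    rw [mem_powersetCard] at hei hej
    obtain ⟨v, hv⟩ := card_pos.1 (hei.2.symm ▸ Nat.pos_of_ne_zero hk)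
    exact disjoint_left.1 (hU hi hj hij) (hei.1 hv) (hej.1 hv)

theorem prod_Icc_add_one_eq_factorial (n : ℕ) : ∏ i ∈ Icc 1 n, (i + 1) = (n + 1).factorial := by
  induction n with
  | zero => simp
  | succ n ih => rw [prod_Icc_succ_top (by omega), ih, Nat.factorial_succ (n + 1), mul_comm]

end Finset

section Coloring

variable {α ι : Type*} [DecidableEq α] [DecidableEq ι]

def monochromaticPairs (col : α → ι) (V : Finset α) : Finset (Finset α) :=
  (V.powersetCard 2).filter fun e => ∀ u ∈ e, ∀ v ∈ e, col u = col v

theorem exists_subset_monochromaticPairs [Fintype ι] (col : α → ι) (V : Finset α)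
    (hV : 3 * Fintype.card ι ≤ #V) {r : ℕ} (hr : r + 1 ≤ #V) :
    ∃ T ⊆ monochromaticPairs col V, #T = r ∧ #(T.sup id) ≤ r + 1 := by
  set C : ι → Finset α := fun i => V.filter (col · = i)
  have hVC : #V = ∑ i, #(C i) := card_eq_sum_card_fiberwise fun v _ => mem_univ (col v)
  obtain ⟨w, hwC, hwsum, hwpairs⟩ := exists_le_sum_choose_two_add_one (fun i => #(C i)) univ
    (by rwa [card_univ, ← hVC]) (hVC ▸ hr)
  choose U hUC hUw using fun i => exists_subset_card_eq (hwC i)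
  set E := univ.biUnion fun i => (U i).powersetCard 2
  have hEV : E ⊆ monochromaticPairs col V := by
    intro e he
    obtain ⟨i, -, hei⟩ := mem_biUnion.1 he
    obtain ⟨heU, he₂⟩ := mem_powersetCard.1 hei
    have hcol : ∀ v ∈ e, v ∈ V ∧ col v = i := fun v hv => mem_filter.1 (hUC i (heU hv))
    exact mem_filter.2 ⟨mem_powersetCard.2 ⟨fun v hv => (hcol v hv).1, he₂⟩,
      fun u hu v hv => (hcol u hu).2.trans (hcol v hv).2.symm⟩
  have hE : r ≤ #E := by
    rw [card_biUnion_powersetCard ((Set.pairwiseDisjoint_filter col _ V).mono hUC) two_ne_zero]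
    simp only [hUw]
    omega
  obtain ⟨T, hTE, hT⟩ := exists_subset_card_eq hE
  refine ⟨T, hTE.trans hEV, hT, ?_⟩
  calc #(T.sup id) ≤ #(univ.biUnion U) := card_le_card <| Finset.sup_le fun e he => by
        obtain ⟨i, -, hei⟩ := mem_biUnion.1 (hTE he)
        exact (mem_powersetCard.1 hei).1.trans (subset_biUnion_of_mem U (mem_univ i))
    _ ≤ ∑ i, #(U i) := card_biUnion_le
    _ = r + 1 := by simp only [hUw, hwsum]

end Coloring

namespace SC

variable {α ι : Type*} [DecidableEq α] [DecidableEq ι]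

theorem mT_card_le_card_sup (K : SC α) {T : Finset (Finset α)} (hT : T ⊆ K.minNonFaces) :
    K.mT #T ≤ #(T.sup id) :=
  Nat.sInf_le ⟨T, hT, rfl, rfl⟩

theorem mem_minNonFaces_of_card_eq_two (K : SC α) {e : Finset α} (he : e ⊆ K.verts)
    (he₂ : #e = 2) (hnf : e ∉ K.faces) : e ∈ K.minNonFaces := by
  refine mem_filter.2 ⟨mem_powerset.2 he, hnf, fun G hG hGe => ?_⟩
  have hGe : G ⊂ e := ssubset_of_subset_of_ne (mem_powerset.1 hG) hGe
  have hG₁ : #G ≤ 1 := by have := card_lt_card hGe; omega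
  obtain ⟨v, hv⟩ := card_pos.1 (by omega : 0 < #e)
  rcases Nat.le_one_iff_eq_zero_or_eq_one.1 hG₁ with hG₀ | hG₁
  · exact K.down_closed _ (K.singleton_mem v (he hv)) G (by simp [card_eq_zero.1 hG₀])
  · obtain ⟨u, rfl⟩ := card_eq_one.1 hG₁
    exact K.singleton_mem u (he (hGe.subset (mem_singleton_self u)))

theorem monochromaticPairs_subset_minNonFaces (K : SC α) (col : α → ι)
    (hcol : ∀ F ∈ K.faces, ∀ i, (F.filter (fun v => col v = i)).card ≤ 1) :
    monochromaticPairs col K.verts ⊆ K.minNonFaces := by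
  intro e he
  obtain ⟨he, hmono⟩ := mem_filter.1 he
  rw [mem_powersetCard] at he
  obtain ⟨u, hu⟩ := card_pos.1 (by omega : 0 < #e)
  refine K.mem_minNonFaces_of_card_eq_two he.1 he.2 fun hface => ?_
  have := hcol e hface (col u)
  rw [filter_true_of_mem fun v hv => hmono v hv u hu] at this
  omega

theorem mT_le_succ_of_coloring [Fintype ι] (K : SC α) (col : α → ι)
    (hcol : ∀ F ∈ K.faces, ∀ i, (F.filter (fun v => col v = i)).card ≤ 1)
    (hn : 3 * Fintype.card ι ≤ #K.verts) {r : ℕ} (hr : r + 1 ≤ #K.verts) :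
    K.mT r ≤ r + 1 := by
  obtain ⟨T, hT, rfl, hTsup⟩ := exists_subset_monochromaticPairs col K.verts hn hr
  exact (K.mT_card_le_card_sup (hT.trans (K.monochromaticPairs_subset_minNonFaces col hcol))).trans hTsup

theorem taylorLBval_le_of_mT_le (K : SC α)
    (h : ∀ r, 1 ≤ r → r ≤ #K.verts - K.dimP1 → K.mT r ≤ r + 1) :
    K.taylorLBval ≤ ((#K.verts - K.dimP1 + 1 : ℕ) : ℚ) := by
  set N := #K.verts - K.dimP1
  have hprod : ∏ i ∈ Icc 1 N, (K.mT i : ℚ) ≤ ∏ i ∈ Icc 1 N, ((i + 1 : ℕ) : ℚ) :=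
    prod_le_prod (fun _ _ => Nat.cast_nonneg _) fun i hi => by
      rw [mem_Icc] at hi; exact_mod_cast h i hi.1 hi.2
  calc K.taylorLBval ≤ (∏ i ∈ Icc 1 N, ((i + 1 : ℕ) : ℚ)) / N.factorial := by
        unfold taylorLBval; gcongr
    _ = ((N + 1 : ℕ) : ℚ) := by
      rw [← Nat.cast_prod, prod_Icc_add_one_eq_factorial, Nat.factorial_succ, Nat.cast_mul]
      field_simp

end SC

/-- For a completely balanced complex of dimension `d-1` on `n ≥ 3d` vertices,
`m̃_r(K) ≤ r + 1` for `1 ≤ r ≤ n - d`; consequently the conjectured Taylor lower bound is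
at most `n - d + 1`. -/
theorem taylorLBval_le_of_balanced {α : Type*} [DecidableEq α] (K : SC α) (d : ℕ)
    (hd : 1 ≤ d) (hdim : K.dimP1 = d)
    (col : α → Fin d)
    (hcol : ∀ F ∈ K.faces, ∀ i, (F.filter (fun v => col v = i)).card ≤ 1)
    (hn : 3 * d ≤ K.verts.card) :
    (∀ r, 1 ≤ r → r ≤ K.verts.card - d → K.mT r ≤ r + 1) ∧
      K.taylorLBval ≤ ((K.verts.card - d + 1 : ℕ) : ℚ) := by
  have hmT : ∀ r, 1 ≤ r → r ≤ K.verts.card - d → K.mT r ≤ r + 1 := fun r _ hr =>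
    K.mT_le_succ_of_coloring col hcol (by rwa [Fintype.card_fin]) (by omega)
  exact ⟨hmT, hdim ▸ K.taylorLBval_le_of_mT_le (hdim ▸ hmT)⟩
end
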